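/- Let d ≥ 1 and let F ∈ C[−1,1] satisfy I_F(σ) ≥ 0. Assume that σ is a minimizer of I_F over all Borel probability measures on S^d, i.e., I_F(μ) ≥ I_F(σ) for every Borel probability measure μ on S^d. Then for every pair of finite Borel measures μ₊, μ₋ on S^d with μ₊(S^d) = μ₋(S^d), the signed measure γ = μ₊ − μ₋ (which has total mass zero) has non-negative energy: I_F(μ₊) + I_F(μ₋) − 2 ∬_{S^d×S^d} F(x·y) dμ₊(x)dμ₋(y) ≥ 0. -/

import Mathlib

/-!
Rotation invariance of `σ` makes the potential `x ↦ ∫ F(x·y) dσ(y)` constant. Hence, for a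
continuous density `f` of mean zero, the probability measure `(1 + ε f) σ` has energy
`I_F(σ) + ε² ∬ f(x) f(y) F(x·y) dσ dσ`, and minimality of `σ` makes this quadratic form
nonnegative. To reach arbitrary measures, smooth `μ₊` and `μ₋` with a normalized bump
`φ(x·u)` supported on a small cap around `u`: the smoothed measures have continuous densities
and, by uniform continuity of `F(x·y)`, their mutual energies are close to those of `μ₊`, `μ₋`.
-/

open MeasureTheory Metric Set
open scoped RealInnerProductSpace ENNReal

noncomputable section

/-- The unit sphere `S^d` in `ℝ^(d+1)`, realized as `EuclideanSpace ℝ (Fin (d+1))`. -/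
abbrev Sphere (d : ℕ) : Type _ := Metric.sphere (0 : EuclideanSpace ℝ (Fin (d + 1))) 1

/-- The uniform probability measure `σ` on `S^d` (the normalized surface measure):
the normalization of the cone (surface) measure associated to the Lebesgue measure. -/
def sphereMeasure (d : ℕ) : Measure (Sphere d) :=
  ((volume : Measure (EuclideanSpace ℝ (Fin (d + 1)))).toSphere univ)⁻¹ •
    (volume : Measure (EuclideanSpace ℝ (Fin (d + 1)))).toSphere

/-- Euclidean inner product `x · y` of two points on the sphere. -/
def ip {d : ℕ} (x y : Sphere d) : ℝ :=
  ⟪(x : EuclideanSpace ℝ (Fin (d + 1))), (y : EuclideanSpace ℝ (Fin (d + 1)))⟫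

/-- Euclidean distance `‖x - y‖` between two points on the sphere. -/
def eucl {d : ℕ} (x y : Sphere d) : ℝ :=
  ‖(x : EuclideanSpace ℝ (Fin (d + 1))) - (y : EuclideanSpace ℝ (Fin (d + 1)))‖

/-- The normalized geodesic distance `d(x,y) = arccos(x·y)/π` on the sphere. -/
def geo {d : ℕ} (x y : Sphere d) : ℝ := Real.arccos (ip x y) / Real.pi

/-- The open spherical cap `C(x,t) = {z ∈ S^d : z · x > t}`. -/
def cap {d : ℕ} (x : Sphere d) (t : ℝ) : Set (Sphere d) := {z | t < ip x z}

/-- The open hemisphere `H(x) = {z ∈ S^d : z · x > 0}`. -/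
def hemi {d : ℕ} (x : Sphere d) : Set (Sphere d) := {z | 0 < ip x z}

open Function

theorem Continuous.integrable_of_compactSpace {X E : Type*} [TopologicalSpace X] [CompactSpace X]
    [MeasurableSpace X] [OpensMeasurableSpace X] [NormedAddCommGroup E] {f : X → E}
    {μ : Measure X} [IsFiniteMeasure μ] (hf : Continuous f) : Integrable f μ :=
  hf.integrable_of_hasCompactSupport (HasCompactSupport.of_compactSpace f)

def mutualEnergy {X : Type*} [MeasurableSpace X] (K : X → X → ℝ) (μ ν : Measure X) : ℝ :=
  ∫ x, ∫ y, K x y ∂ν ∂μ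

/-- The smoothing of a measure `μ` by `k` is the `σ`-density `x ↦ ∫ u, k x u ∂μ`. -/
structure IsMollifier {X : Type*} [MeasurableSpace X] [TopologicalSpace X] (σ : Measure X)
    (K : X → X → ℝ) (η : ℝ) (k : X → X → ℝ) : Prop where
  continuous : Continuous fun p : X × X => k p.1 p.2
  nonneg : ∀ x u, 0 ≤ k x u
  integral_eq_one : ∀ u, ∫ x, k x u ∂σ = 1
  abs_sub_le : ∀ x y u v, k x u ≠ 0 → k y v ≠ 0 → |K x y - K u v| ≤ η

section KernelEnergy

variable {X : Type*} [MeasurableSpace X] [TopologicalSpace X] [CompactSpace X]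
  [SecondCountableTopology X] [BorelSpace X] {K : X → X → ℝ} {σ : Measure X}

theorem mutualEnergy_eq_integral_prod (hK : Continuous fun p : X × X => K p.1 p.2)
    (μ ν : Measure X) [IsFiniteMeasure μ] [IsFiniteMeasure ν] :
    mutualEnergy K μ ν = ∫ p, K p.1 p.2 ∂μ.prod ν :=
  (integral_prod _ hK.integrable_of_compactSpace).symm

theorem mutualEnergy_comm (hK : Continuous fun p : X × X => K p.1 p.2)
    (hsymm : ∀ x y, K x y = K y x) (μ ν : Measure X) [IsFiniteMeasure μ] [IsFiniteMeasure ν] :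
    mutualEnergy K μ ν = mutualEnergy K ν μ := by
  rw [mutualEnergy, integral_integral_swap hK.integrable_of_compactSpace]
  simp only [mutualEnergy, hsymm _ _]

theorem mutualEnergy_withDensity_ofReal (hK : Continuous fun p : X × X => K p.1 p.2)
    [IsFiniteMeasure σ] {v w : X → ℝ} (hv : Continuous v) (hw : Continuous w)
    (hv0 : 0 ≤ v) (hw0 : 0 ≤ w) :
    mutualEnergy K (σ.withDensity fun x => ENNReal.ofReal (v x))
        (σ.withDensity fun y => ENNReal.ofReal (w y))
      = ∫ p, v p.1 * w p.2 * K p.1 p.2 ∂σ.prod σ := by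
  have hfin : ∀ u : X → ℝ, ∀ᵐ x ∂σ, ENNReal.ofReal (u x) < ⊤ := fun u =>
    ae_of_all _ fun _ => ENNReal.ofReal_lt_top
  rw [integral_prod _ (by fun_prop : Continuous _).integrable_of_compactSpace, mutualEnergy,
    integral_withDensity_eq_integral_toReal_smul hv.measurable.ennreal_ofReal (hfin v)]
  congr 1 with x
  rw [integral_withDensity_eq_integral_toReal_smul hw.measurable.ennreal_ofReal (hfin w),
    smul_eq_mul, ← integral_const_mul]
  congr 1 with y
  simp only [ENNReal.toReal_ofReal (hv0 x), ENNReal.toReal_ofReal (hw0 y), smul_eq_mul]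
  ring

theorem integral_prod_mul_fst_eq_zero [IsFiniteMeasure σ]
    (hK : Continuous fun p : X × X => K p.1 p.2) {c : ℝ} (hpot : ∀ x, ∫ y, K x y ∂σ = c)
    {f : X → ℝ} (hf : Continuous f) (hf0 : ∫ x, f x ∂σ = 0) :
    ∫ p, f p.1 * K p.1 p.2 ∂σ.prod σ = 0 := by
  rw [integral_prod _ (by fun_prop : Continuous _).integrable_of_compactSpace]
  simp only [integral_const_mul, hpot, integral_mul_const, hf0, zero_mul]

theorem integral_prod_one_add_mul_mul_one_add_mul [IsFiniteMeasure σ]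
    (hK : Continuous fun p : X × X => K p.1 p.2) (hsymm : ∀ x y, K x y = K y x) {c : ℝ}
    (hpot : ∀ x, ∫ y, K x y ∂σ = c) {f : X → ℝ} (hf : Continuous f) (hf0 : ∫ x, f x ∂σ = 0)
    (ε : ℝ) :
    ∫ p, (1 + ε * f p.1) * (1 + ε * f p.2) * K p.1 p.2 ∂σ.prod σ
      = ∫ p, K p.1 p.2 ∂σ.prod σ + ε ^ 2 * ∫ p, f p.1 * f p.2 * K p.1 p.2 ∂σ.prod σ := by
  have hfst := integral_prod_mul_fst_eq_zero hK hpot hf hf0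
  have hsnd : ∫ p, f p.2 * K p.1 p.2 ∂σ.prod σ = 0 := by
    rw [← integral_prod_swap]
    simpa only [Prod.fst_swap, Prod.snd_swap, hsymm _ _] using hfst
  have hint : ∀ g : X × X → ℝ, Continuous g → Integrable g (σ.prod σ) :=
    fun _ hg => hg.integrable_of_compactSpace
  have hexp : ∀ p : X × X, (1 + ε * f p.1) * (1 + ε * f p.2) * K p.1 p.2
      = K p.1 p.2 + ε * (f p.1 * K p.1 p.2) + ε * (f p.2 * K p.1 p.2)
        + ε ^ 2 * (f p.1 * f p.2 * K p.1 p.2) := fun p => by ring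
  simp only [hexp]
  rw [integral_add (hint _ (by fun_prop)) (hint _ (by fun_prop)),
    integral_add (hint _ (by fun_prop)) (hint _ (by fun_prop)),
    integral_add (hint _ (by fun_prop)) (hint _ (by fun_prop)),
    integral_const_mul, integral_const_mul, integral_const_mul, hfst, hsnd]
  ring

theorem integral_prod_mul_mul_nonneg_of_forall_le [IsProbabilityMeasure σ]
    (hK : Continuous fun p : X × X => K p.1 p.2) (hsymm : ∀ x y, K x y = K y x) {c : ℝ}
    (hpot : ∀ x, ∫ y, K x y ∂σ = c)
    (hmin : ∀ μ : Measure X, IsProbabilityMeasure μ → mutualEnergy K σ σ ≤ mutualEnergy K μ μ)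
    {f : X → ℝ} (hf : Continuous f) (hf0 : ∫ x, f x ∂σ = 0) :
    0 ≤ ∫ p, f p.1 * f p.2 * K p.1 p.2 ∂σ.prod σ := by
  obtain ⟨M, hM⟩ := isCompact_univ.exists_bound_of_continuousOn hf.continuousOn
  set ε := (|M| + 1)⁻¹ with hε
  have hε0 : 0 < ε := by positivity
  have hW0 : ∀ x, 0 ≤ 1 + ε * f x := fun x => by
    have h1 : ε * |f x| ≤ 1 := by
      rw [hε, inv_mul_le_one₀ (by positivity)]
      have := hM x (mem_univ x)
      rw [Real.norm_eq_abs] at this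
      linarith [le_abs_self M]
    nlinarith [neg_abs_le (f x)]
  have hW : Continuous fun x => 1 + ε * f x := by fun_prop
  set μ := σ.withDensity fun x => ENNReal.ofReal (1 + ε * f x)
  have hμ : IsProbabilityMeasure μ := by
    constructor
    rw [withDensity_apply _ MeasurableSet.univ, Measure.restrict_univ,
      ← ofReal_integral_eq_lintegral_ofReal hW.integrable_of_compactSpace (ae_of_all _ hW0),
      integral_add (integrable_const _) (hf.integrable_of_compactSpace.const_mul ε),
      integral_const_mul, hf0]
    simp
  have h := hmin μ hμ
  rw [mutualEnergy_withDensity_ofReal hK hW hW hW0 hW0,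
    integral_prod_one_add_mul_mul_one_add_mul hK hsymm hpot hf hf0,
    ← mutualEnergy_eq_integral_prod hK] at h
  exact nonneg_of_mul_nonneg_right ((le_add_iff_nonneg_right _).1 h) (pow_pos hε0 2)

theorem integral_prod_sub_mul_sub [IsFiniteMeasure σ] {a b : X → ℝ} (ha : Continuous a)
    (hb : Continuous b) (hK : Continuous fun p : X × X => K p.1 p.2) :
    ∫ p, (a p.1 - b p.1) * (a p.2 - b p.2) * K p.1 p.2 ∂σ.prod σ
      = ∫ p, a p.1 * a p.2 * K p.1 p.2 ∂σ.prod σ - ∫ p, a p.1 * b p.2 * K p.1 p.2 ∂σ.prod σ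
        - ∫ p, b p.1 * a p.2 * K p.1 p.2 ∂σ.prod σ
        + ∫ p, b p.1 * b p.2 * K p.1 p.2 ∂σ.prod σ := by
  have hexp : ∀ p : X × X, (a p.1 - b p.1) * (a p.2 - b p.2) * K p.1 p.2
      = a p.1 * a p.2 * K p.1 p.2 - a p.1 * b p.2 * K p.1 p.2
        - b p.1 * a p.2 * K p.1 p.2 + b p.1 * b p.2 * K p.1 p.2 := fun p => by ring
  have hint : ∀ g : X × X → ℝ, Continuous g → Integrable g (σ.prod σ) :=
    fun _ hg => hg.integrable_of_compactSpace
  simp only [hexp]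
  rw [integral_add (hint _ (by fun_prop)) (hint _ (by fun_prop)),
    integral_sub (hint _ (by fun_prop)) (hint _ (by fun_prop)),
    integral_sub (hint _ (by fun_prop)) (hint _ (by fun_prop))]

namespace IsMollifier

variable {η : ℝ} {k : X → X → ℝ}

theorem continuous_integral [T2Space X] (hk : IsMollifier σ K η k) (μ : Measure X)
    [IsFiniteMeasure μ] : Continuous fun x => ∫ u, k x u ∂μ := by
  simpa only [Measure.restrict_univ] using
    continuous_parametric_integral_of_continuous (μ := μ) hk.continuous isCompact_univ

theorem integral_integral [IsFiniteMeasure σ] (hk : IsMollifier σ K η k) (μ : Measure X)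
    [IsFiniteMeasure μ] : ∫ x, ∫ u, k x u ∂μ ∂σ = μ.real univ := by
  rw [integral_integral_swap hk.continuous.integrable_of_compactSpace]
  simp [hk.integral_eq_one]

theorem abs_integral_prod_sub_le [IsProbabilityMeasure σ] (hk : IsMollifier σ K η k)
    (hK : Continuous fun p : X × X => K p.1 p.2) (u v : X) :
    |∫ p, k p.1 u * k p.2 v * K p.1 p.2 ∂σ.prod σ - K u v| ≤ η := by
  have hkk : ∫ p, k p.1 u * k p.2 v ∂σ.prod σ = 1 := by
    rw [integral_prod_mul (fun x => k x u) (fun y => k y v), hk.integral_eq_one,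
      hk.integral_eq_one, one_mul]
  have := hk.continuous
  have hcont : ∀ c : ℝ, Continuous fun p : X × X => k p.1 u * k p.2 v * c := by fun_prop
  have hbound : ∀ p : X × X,
      ‖k p.1 u * k p.2 v * (K p.1 p.2 - K u v)‖ ≤ k p.1 u * k p.2 v * η := fun p => by
    have hk0 : 0 ≤ k p.1 u * k p.2 v := mul_nonneg (hk.nonneg _ _) (hk.nonneg _ _)
    rw [Real.norm_eq_abs, abs_mul, abs_of_nonneg hk0]
    rcases eq_or_ne (k p.1 u) 0 with h1 | h1
    · simp [h1]
    rcases eq_or_ne (k p.2 v) 0 with h2 | h2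
    · simp [h2]
    exact mul_le_mul_of_nonneg_left (hk.abs_sub_le _ _ _ _ h1 h2) hk0
  calc |∫ p, k p.1 u * k p.2 v * K p.1 p.2 ∂σ.prod σ - K u v|
      = |∫ p, k p.1 u * k p.2 v * (K p.1 p.2 - K u v) ∂σ.prod σ| := by
        simp only [mul_sub]
        rw [integral_sub (by fun_prop : Continuous _).integrable_of_compactSpace
          (hcont _).integrable_of_compactSpace, integral_mul_const, hkk, one_mul]
    _ ≤ ∫ p, k p.1 u * k p.2 v * η ∂σ.prod σ :=
        norm_integral_le_of_norm_le (hcont η).integrable_of_compactSpace (ae_of_all _ hbound)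
    _ = η := by rw [integral_mul_const, hkk, one_mul]

theorem abs_integral_prod_sub_mutualEnergy_le [IsProbabilityMeasure σ]
    (hk : IsMollifier σ K η k) (hK : Continuous fun p : X × X => K p.1 p.2) (μ ν : Measure X)
    [IsFiniteMeasure μ] [IsFiniteMeasure ν] :
    |∫ p, (∫ u, k p.1 u ∂μ) * (∫ v, k p.2 v ∂ν) * K p.1 p.2 ∂σ.prod σ - mutualEnergy K μ ν|
      ≤ η * (μ.real univ * ν.real univ) := by
  set Φ : X × X → X × X → ℝ := fun p q => k p.1 q.1 * k p.2 q.2 * K p.1 p.2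
  have hΦ : Integrable (uncurry Φ) ((σ.prod σ).prod (μ.prod ν)) := by
    have := hk.continuous
    exact (by fun_prop : Continuous (uncurry Φ)).integrable_of_compactSpace
  have hfactor : ∀ p : X × X, (∫ u, k p.1 u ∂μ) * (∫ v, k p.2 v ∂ν) * K p.1 p.2
      = ∫ q, Φ p q ∂μ.prod ν := fun p => by
    rw [integral_mul_const, integral_prod_mul (fun u => k p.1 u) (fun v => k p.2 v)]
  simp only [hfactor]
  rw [integral_integral_swap hΦ, mutualEnergy_eq_integral_prod hK,
    ← integral_sub (f := fun q => ∫ p, Φ p q ∂σ.prod σ) hΦ.integral_prod_right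
      hK.integrable_of_compactSpace,
    ← measureReal_prod_prod, univ_prod_univ, ← Real.norm_eq_abs]
  refine norm_integral_le_of_norm_le_const (ae_of_all _ fun q => ?_)
  exact hk.abs_integral_prod_sub_le hK q.1 q.2

theorem two_mul_mutualEnergy_le_add [T2Space X] [IsProbabilityMeasure σ]
    (hk : IsMollifier σ K η k) (hK : Continuous fun p : X × X => K p.1 p.2)
    (hsymm : ∀ x y, K x y = K y x) {c : ℝ} (hpot : ∀ x, ∫ y, K x y ∂σ = c)
    (hmin : ∀ μ : Measure X, IsProbabilityMeasure μ → mutualEnergy K σ σ ≤ mutualEnergy K μ μ)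
    (μ ν : Measure X) [IsFiniteMeasure μ] [IsFiniteMeasure ν]
    (hmass : μ.real univ = ν.real univ) :
    2 * mutualEnergy K μ ν
      ≤ mutualEnergy K μ μ + mutualEnergy K ν ν + 4 * (η * (μ.real univ * ν.real univ)) := by
  have hμμ := abs_le.1 (hk.abs_integral_prod_sub_mutualEnergy_le hK μ μ)
  have hμν := abs_le.1 (hk.abs_integral_prod_sub_mutualEnergy_le hK μ ν)
  have hνμ := abs_le.1 (hk.abs_integral_prod_sub_mutualEnergy_le hK ν μ)
  have hνν := abs_le.1 (hk.abs_integral_prod_sub_mutualEnergy_le hK ν ν)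
  have ha := hk.continuous_integral μ
  have hb := hk.continuous_integral ν
  have hQ := integral_prod_mul_mul_nonneg_of_forall_le hK hsymm hpot hmin
    (f := fun x => (∫ u, k x u ∂μ) - ∫ u, k x u ∂ν) (ha.sub hb) (by
      rw [integral_sub ha.integrable_of_compactSpace hb.integrable_of_compactSpace,
        hk.integral_integral, hk.integral_integral, hmass, sub_self])
  rw [integral_prod_sub_mul_sub ha hb hK] at hQ
  rw [mutualEnergy_comm hK hsymm ν μ, hmass] at *
  linarith

end IsMollifier

theorem two_mul_mutualEnergy_le_add [T2Space X] [IsProbabilityMeasure σ]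
    (hK : Continuous fun p : X × X => K p.1 p.2) (hsymm : ∀ x y, K x y = K y x) {c : ℝ}
    (hpot : ∀ x, ∫ y, K x y ∂σ = c)
    (hmin : ∀ μ : Measure X, IsProbabilityMeasure μ → mutualEnergy K σ σ ≤ mutualEnergy K μ μ)
    (hmoll : ∀ η > 0, ∃ k, IsMollifier σ K η k)
    (μ ν : Measure X) [IsFiniteMeasure μ] [IsFiniteMeasure ν] (hmass : μ univ = ν univ) :
    2 * mutualEnergy K μ ν ≤ mutualEnergy K μ μ + mutualEnergy K ν ν := by
  refine le_of_forall_pos_le_add fun ε hε => ?_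
  set C := μ.real univ * ν.real univ
  have hC : 0 ≤ C := by positivity
  obtain ⟨k, hk⟩ := hmoll (ε / (4 * C + 1)) (by positivity)
  refine (hk.two_mul_mutualEnergy_le_add hK hsymm hpot hmin μ ν
    (congrArg ENNReal.toReal hmass)).trans (add_le_add_right ?_ _)
  rw [div_mul_eq_mul_div, mul_div_assoc', div_le_iff₀ (by positivity)]
  nlinarith

end KernelEnergy

section Rotation

open scoped Pointwise

variable {E : Type*} [NormedAddCommGroup E]

def LinearIsometryEquiv.unitSphereHomeomorph [NormedSpace ℝ E] (R : E ≃ₗᵢ[ℝ] E) :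
    sphere (0 : E) 1 ≃ₜ sphere (0 : E) 1 :=
  R.toHomeomorph.subtype fun x => by simp

theorem LinearIsometryEquiv.measurePreserving_unitSphereHomeomorph [NormedSpace ℝ E]
    [MeasurableSpace E] [BorelSpace E] {μ : Measure E} (R : E ≃ₗᵢ[ℝ] E)
    (hR : MeasurePreserving R μ μ) :
    MeasurePreserving R.unitSphereHomeomorph μ.toSphere μ.toSphere := by
  refine ⟨R.unitSphereHomeomorph.continuous.measurable, Measure.ext fun s hs => ?_⟩
  have himage : ((↑) '' (R.unitSphereHomeomorph ⁻¹' s) : Set E) = R.symm '' ((↑) '' s) := by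
    simp only [← Homeomorph.image_symm, image_image]
    rfl
  have hsmul : Ioo (0 : ℝ) 1 • R.symm '' ((↑) '' s) = R ⁻¹' (Ioo (0 : ℝ) 1 • ((↑) '' s)) := by
    rw [← R.symm_symm, ← R.symm.image_eq_preimage_symm, R.symm_symm]
    exact (image_image2_distrib_right fun r a => _root_.map_smul R.symm r a).symm
  rw [Measure.map_apply R.unitSphereHomeomorph.continuous.measurable hs,
    Measure.toSphere_apply' _ hs,
    Measure.toSphere_apply' _ (R.unitSphereHomeomorph.continuous.measurable hs), himage, hsmul]
  exact congrArg _ (MeasurePreserving.measure_preimage_equiv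
    (f := R.toHomeomorph.toMeasurableEquiv) hR _)

theorem exists_unitSphereHomeomorph_apply_eq [InnerProductSpace ℝ E] (x y : sphere (0 : E) 1) :
    ∃ R : E ≃ₗᵢ[ℝ] E, R.unitSphereHomeomorph x = y := by
  refine ⟨(ℝ ∙ ((x : E) - y))ᗮ.reflection, Subtype.ext ?_⟩
  exact Submodule.reflection_sub (by rw [norm_eq_of_mem_sphere, norm_eq_of_mem_sphere])

end Rotation

section SphereEnergy

variable {d : ℕ}

local notation "E" => EuclideanSpace ℝ (Fin (d + 1))

theorem ip_comm (x y : Sphere d) : ip x y = ip y x := real_inner_comm _ _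

theorem ip_self (x : Sphere d) : ip x x = 1 := by
  rw [ip, real_inner_self_eq_norm_sq, norm_eq_of_mem_sphere, one_pow]

theorem ip_mem_Icc (x y : Sphere d) : ip x y ∈ Icc (-1 : ℝ) 1 := by
  have h := abs_real_inner_le_norm (x : E) y
  rw [norm_eq_of_mem_sphere, norm_eq_of_mem_sphere, mul_one] at h
  exact abs_le.1 h

theorem continuous_ip : Continuous fun p : Sphere d × Sphere d => ip p.1 p.2 := by
  unfold ip; fun_prop

theorem dist_sq_eq_two_sub_two_mul_ip (x y : Sphere d) : dist x y ^ 2 = 2 - 2 * ip x y := by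
  rw [Subtype.dist_eq, dist_eq_norm, norm_sub_sq_real, norm_eq_of_mem_sphere,
    norm_eq_of_mem_sphere, ip]
  ring

instance : IsProbabilityMeasure (sphereMeasure d) := by
  have : NeZero (volume : Measure E).toSphere := ⟨Measure.toSphere_ne_zero _⟩
  unfold sphereMeasure
  infer_instance

instance : (sphereMeasure d).IsOpenPosMeasure :=
  Measure.isOpenPosMeasure_smul _ (ENNReal.inv_ne_zero.2 (measure_ne_top _ _))

theorem measurePreserving_sphereMeasure (R : E ≃ₗᵢ[ℝ] E) :
    MeasurePreserving R.unitSphereHomeomorph (sphereMeasure d) (sphereMeasure d) :=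
  (R.measurePreserving_unitSphereHomeomorph R.measurePreserving).smul_measure _

theorem integral_comp_ip_eq (f : ℝ → ℝ) (x y : Sphere d) :
    ∫ z, f (ip x z) ∂sphereMeasure d = ∫ z, f (ip y z) ∂sphereMeasure d := by
  obtain ⟨R, hR⟩ := exists_unitSphereHomeomorph_apply_eq x y
  rw [← hR, ← MeasurePreserving.integral_comp' (f := R.unitSphereHomeomorph.toMeasurableEquiv)
    (measurePreserving_sphereMeasure R) fun z => f (ip (R.unitSphereHomeomorph x) z)]
  congr 1 with z
  exact congrArg f (R.inner_map_map x z).symm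

theorem integral_comp_ip_eq_mutualEnergy (f : ℝ → ℝ) (x : Sphere d) :
    ∫ y, f (ip x y) ∂sphereMeasure d
      = mutualEnergy (fun x y => f (ip x y)) (sphereMeasure d) (sphereMeasure d) := by
  simp [mutualEnergy, integral_comp_ip_eq f _ x]

theorem exists_isMollifier_sphereMeasure {F : ℝ → ℝ} (hF : ContinuousOn F (Icc (-1) 1))
    {η : ℝ} (hη : 0 < η) :
    ∃ k, IsMollifier (sphereMeasure d) (fun x y => F (ip x y)) η k := by
  have hK : Continuous fun p : Sphere d × Sphere d => F (ip p.1 p.2) :=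
    hF.comp_continuous continuous_ip fun p => ip_mem_Icc p.1 p.2
  obtain ⟨δ, hδ, hKδ⟩ := Metric.uniformContinuous_iff.1
    (CompactSpace.uniformContinuous_of_continuous hK) η hη
  set t := 1 - δ ^ 2 / 2
  have hdist : ∀ x u : Sphere d, t < ip x u → dist x u < δ := fun x u h => by
    have : dist x u ^ 2 < δ ^ 2 := by
      rw [dist_sq_eq_two_sub_two_mul_ip]; simp only [t] at h; linarith
    exact lt_of_pow_lt_pow_left₀ 2 hδ.le this
  set φ : ℝ → ℝ := fun s => max 0 (s - t)
  have hφ : Continuous φ := by fun_prop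
  set c := mutualEnergy (fun x y => φ (ip x y)) (sphereMeasure d) (sphereMeasure d)
  have hφc : ∀ u : Sphere d, ∫ x, φ (ip x u) ∂sphereMeasure d = c := fun u => by
    simp only [ip_comm _ u, integral_comp_ip_eq_mutualEnergy, c]
  have hc : 0 < c := by
    obtain ⟨u⟩ : Nonempty (Sphere d) := (NormedSpace.sphere_nonempty.2 zero_le_one).to_subtype
    rw [← hφc u]
    refine (hφ.comp (continuous_ip.comp (continuous_id.prodMk continuous_const))
      ).integral_pos_of_hasCompactSupport_nonneg_nonzero (HasCompactSupport.of_compactSpace _)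
      (fun x => le_max_left _ _) (x := u) ?_
    have : 0 < δ ^ 2 / 2 := by positivity
    simp only [φ, ip_self, t]
    exact (lt_max_of_lt_right (by linarith)).ne'
  refine ⟨fun x u => φ (ip x u) / c, (hφ.comp continuous_ip).div_const c,
    fun x u => div_nonneg (le_max_left _ _) hc.le, fun u => ?_, fun x y u v hxu hyv => ?_⟩
  · rw [integral_div, hφc, div_self hc.ne']
  have hclose : ∀ {a b : Sphere d}, φ (ip a b) / c ≠ 0 → dist a b < δ := fun h => by
    refine hdist _ _ (not_le.1 fun hle => h ?_)
    simp only [φ, max_eq_left (sub_nonpos.2 hle), zero_div]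
  exact (hKδ (a := (x, y)) (b := (u, v))
    (by rw [Prod.dist_eq]; exact max_lt (hclose hxu) (hclose hyv))).le

end SphereEnergy

theorem mass_zero_energy_nonneg_general (d : ℕ)
    (F : ℝ → ℝ) (hF : ContinuousOn F (Set.Icc (-1 : ℝ) 1))
    (hmin : ∀ μ : Measure (Sphere d), IsProbabilityMeasure μ →
        (∫ x, ∫ y, F (ip x y) ∂(sphereMeasure d) ∂(sphereMeasure d))
          ≤ ∫ x, ∫ y, F (ip x y) ∂μ ∂μ)
    (μp μm : Measure (Sphere d)) [IsFiniteMeasure μp] [IsFiniteMeasure μm]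
    (hmass : μp Set.univ = μm Set.univ) :
    2 * (∫ x, ∫ y, F (ip x y) ∂μm ∂μp)
      ≤ (∫ x, ∫ y, F (ip x y) ∂μp ∂μp) + (∫ x, ∫ y, F (ip x y) ∂μm ∂μm) :=
  two_mul_mutualEnergy_le_add (hF.comp_continuous continuous_ip fun p => ip_mem_Icc p.1 p.2)
    (fun x y => by rw [ip_comm]) (integral_comp_ip_eq_mutualEnergy F) hmin
    (fun _ hη => exists_isMollifier_sphereMeasure hF hη) μp μm hmass

/-- Let `F ∈ C[-1,1]` with `I_F(σ) ≥ 0`, and suppose `σ` minimizes `I_F` over Borel probability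
measures on `S^d`. Then every finite signed Borel measure of total mass zero, written as
`γ = μ₊ - μ₋` with `μ₊(S^d) = μ₋(S^d)`, has non-negative energy:
`2 ∬ F(x·y) dμ₊ dμ₋ ≤ I_F(μ₊) + I_F(μ₋)`. -/
theorem mass_zero_energy_nonneg (d : ℕ) (hd : 1 ≤ d)
    (F : ℝ → ℝ) (hF : ContinuousOn F (Set.Icc (-1 : ℝ) 1))
    (hF0 : 0 ≤ ∫ x, ∫ y, F (ip x y) ∂(sphereMeasure d) ∂(sphereMeasure d))
    (hmin : ∀ μ : Measure (Sphere d), IsProbabilityMeasure μ →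
        (∫ x, ∫ y, F (ip x y) ∂(sphereMeasure d) ∂(sphereMeasure d))
          ≤ ∫ x, ∫ y, F (ip x y) ∂μ ∂μ)
    (μp μm : Measure (Sphere d)) [IsFiniteMeasure μp] [IsFiniteMeasure μm]
    (hmass : μp Set.univ = μm Set.univ) :
    2 * (∫ x, ∫ y, F (ip x y) ∂μm ∂μp)
      ≤ (∫ x, ∫ y, F (ip x y) ∂μp ∂μp) + (∫ x, ∫ y, F (ip x y) ∂μm ∂μm) :=
  mass_zero_energy_nonneg_general d F hF hmin μp μm hmass
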